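/- Let T be a tree on vertex set {0,...,n} with n ≥ 1, k ≥ 2 an integer, and e = {u, u+1} an edge of T such that 0,...,u lie in one component of T - e and u+1,...,n lie in the other. Define for each pair of vertices v, w the polynomial S_{v,w}(x) = Σ_{i ∈ {0,...,n}^{k-2}} d_T({v, w} ∪ {i_1,...,i_{k-2}}) x_{i_1}···x_{i_{k-2}}. Then for every w ∈ {0,...,u}, S_{u,w} - S_{u+1,w} = -(Σ_{i=0}^{u} x_i)^{k-2}, and for every w ∈ {u+1,...,n}, S_{u,w} - S_{u+1,w} = (Σ_{i=u+1}^{n} x_i)^{k-2}. -/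

import Mathlib

open SimpleGraph MvPolynomial

/-- The Steiner distance of a set `S` of vertices of `G`: the minimum number of edges
of a connected subgraph of `G` containing `S`. -/
noncomputable def steinerDist {V : Type*} (G : SimpleGraph V) (S : Set V) : ℕ :=
  sInf {m | ∃ H : G.Subgraph, H.Connected ∧ S ⊆ H.verts ∧ H.edgeSet.ncard = m}

/-- The polynomial `S_{v,w}(x) = Σ_{i ∈ V^{k-2}} d_G({v,w} ∪ {i_1,…,i_{k-2}}) x_{i_1}⋯x_{i_{k-2}}`. -/
noncomputable def steinerRow {V : Type*} [Fintype V] (G : SimpleGraph V)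
    (R : Type*) [CommRing R] (k : ℕ) (v w : V) : MvPolynomial V R :=
  ∑ f : Fin (k - 2) → V,
    (steinerDist G ({v, w} ∪ Set.range f) : MvPolynomial V R) * ∏ j, X (f j)

/-! Let `e = s(u, u')` and let `A` be the side of `u` in `T - e`. For `w ∈ A` and a set `S`, if
`S` meets the other side then `{u, w} ∪ S` and `{u', w} ∪ S` both have the Steiner distance of
`{u, u', w} ∪ S`, because every connected subgraph containing either of them crosses `e`. If
`S ⊆ A`, adding `u'` to `{u, w} ∪ S` costs exactly the edge `e`. So the coefficient of a tuple
in `S_{u,w} - S_{u',w}` is `-1` if all its entries lie in `A` and `0` otherwise, and these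
coefficients sum to `-(∑_{i ∈ A} x_i)^(k-2)`. For `w ∉ A` swap the roles of `u` and `u'`. -/

theorem Finset.sum_pow_eq_sum_ite_forall_mem {ι R : Type*} [Fintype ι] [DecidableEq ι]
    [CommSemiring R] (s : Finset ι) (g : ι → R) (m : ℕ) :
    (∑ i ∈ s, g i) ^ m = ∑ f : Fin m → ι, if ∀ j, f j ∈ s then ∏ j, g (f j) else 0 := by
  rw [Finset.sum_pow', ← Finset.sum_filter]
  congr 1
  ext f
  simp [Fintype.mem_piFinset]

namespace SimpleGraph

variable {V : Type*} {G : SimpleGraph V} {S : Set V} {a b c w x y : V}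

theorem Subgraph.Connected.exists_isPath_toSubgraph_le {H : G.Subgraph} (hH : H.Connected)
    (hx : x ∈ H.verts) (hy : y ∈ H.verts) :
    ∃ p : G.Walk x y, p.IsPath ∧ p.toSubgraph ≤ H := by
  classical
  obtain ⟨q, hq⟩ := (H.preconnected_iff_forall_exists_walk_subgraph.1 hH.preconnected) hx hy
  exact ⟨q.bypass, q.bypass_isPath, Walk.toSubgraph_bypass_le_toSubgraph.trans hq⟩

theorem Preconnected.reachable_deleteEdges_or (hG : G.Preconnected) (a b v : V) :
    (G.deleteEdges {s(a, b)}).Reachable a v ∨ (G.deleteEdges {s(a, b)}).Reachable b v := by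
  set G' := G.deleteEdges {s(a, b)}
  suffices ∀ {x y : V} (p : G.Walk x y), G'.Reachable a x ∨ G'.Reachable b x →
      G'.Reachable a y ∨ G'.Reachable b y from (hG a v).elim fun p ↦ this p (Or.inl .rfl)
  intro x y p
  induction p with
  | nil => exact id
  | @cons x z _ h _ ih =>
    refine fun hx ↦ ih ?_
    by_cases hxz : s(x, z) = s(a, b)
    · rcases Sym2.eq_iff.1 hxz with ⟨-, rfl⟩ | ⟨-, rfl⟩
      exacts [Or.inr .rfl, Or.inl .rfl]
    · have h' : G'.Adj x z := by simpa [G', hxz] using h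
      exact hx.imp (·.trans h'.reachable) (·.trans h'.reachable)

theorem Subgraph.Connected.mem_edgeSet_of_isBridge {H : G.Subgraph} (hH : H.Connected)
    (hab : G.IsBridge s(a, b)) (hx : x ∈ H.verts) (hy : y ∈ H.verts)
    (hax : (G.deleteEdges {s(a, b)}).Reachable a x)
    (hby : (G.deleteEdges {s(a, b)}).Reachable b y) : s(a, b) ∈ H.edgeSet := by
  obtain ⟨p, -, hpH⟩ := hH.exists_isPath_toSubgraph_le hx hy
  have hp : s(a, b) ∈ p.edges := by
    by_contra hp
    exact hab (hax.trans ((reachable_deleteEdges_iff_exists_walk.2 ⟨p, hp⟩).trans hby.symm))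
  exact Subgraph.edgeSet_mono hpH (p.mem_edges_toSubgraph.2 hp)

theorem IsAcyclic.not_mem_edges_of_reachable_deleteEdges (hG : G.IsAcyclic) {p : G.Walk x y}
    (hp : p.IsPath) (h : (G.deleteEdges {s(a, b)}).Reachable x y) : s(a, b) ∉ p.edges := by
  classical
  obtain ⟨q, hq⟩ := reachable_deleteEdges_iff_exists_walk.1 h
  have : p = q.bypass :=
    congrArg Subtype.val ((hG.subsingleton_path x y).elim ⟨p, hp⟩ ⟨_, q.bypass_isPath⟩)
  exact this ▸ fun h ↦ hq (q.edges_bypass_subset_edges h)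

/-- Reachability is taken in `G`, not in `H`: in a forest the two agree, paths being unique. -/
theorem IsAcyclic.connected_induce_reachable_deleteEdges (hG : G.IsAcyclic) {H : G.Subgraph}
    (hH : H.Connected) (ha : a ∈ H.verts) :
    (H.induce {v | v ∈ H.verts ∧ (G.deleteEdges {s(b, c)}).Reachable a v}).Connected := by
  classical
  set A := {v | v ∈ H.verts ∧ (G.deleteEdges {s(b, c)}).Reachable a v}
  have hstar : ∀ {x}, x ∈ A → ∃ p : G.Walk a x, p.toSubgraph ≤ H.induce A := by
    rintro x ⟨hx, hax⟩
    obtain ⟨p, hp, hpH⟩ := hH.exists_isPath_toSubgraph_le ha hx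
    have hpe := hG.not_mem_edges_of_reachable_deleteEdges hp hax
    have hsupp : p.toSubgraph.verts ⊆ A := fun z hz ↦ by
      rw [Walk.mem_verts_toSubgraph] at hz
      exact ⟨Subgraph.verts_mono hpH (p.mem_verts_toSubgraph.2 hz),
        reachable_deleteEdges_iff_exists_walk.2
          ⟨p.takeUntil z hz, fun h ↦ hpe (p.edges_takeUntil_subset_edges hz h)⟩⟩
    exact ⟨p, Subgraph.induce_self_verts.symm.le.trans (Subgraph.induce_mono hpH hsupp)⟩
  refine (H.induce A).connected_iff_forall_exists_walk_subgraph.2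
    ⟨⟨a, ha, .rfl⟩, fun hx hy ↦ ?_⟩
  obtain ⟨p, hp⟩ := hstar hx
  obtain ⟨q, hq⟩ := hstar hy
  exact ⟨p.reverse.append q, by
    rw [Walk.toSubgraph_append, Walk.toSubgraph_reverse]; exact sup_le hp hq⟩

theorem steinerDist_le {H : G.Subgraph} (hH : H.Connected) (hS : S ⊆ H.verts) :
    steinerDist G S ≤ H.edgeSet.ncard :=
  Nat.sInf_le ⟨H, hH, hS, rfl⟩

theorem exists_steinerDist_eq (hG : G.Connected) (S : Set V) :
    ∃ H : G.Subgraph, H.Connected ∧ S ⊆ H.verts ∧ H.edgeSet.ncard = steinerDist G S := by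
  refine Nat.sInf_mem
    (s := {m | ∃ H : G.Subgraph, H.Connected ∧ S ⊆ H.verts ∧ H.edgeSet.ncard = m})
    ⟨_, ⊤, ?_, Set.subset_univ S, rfl⟩
  exact Subgraph.connected_iff'.2 (Subgraph.topIso.connected_iff.2 hG)

theorem steinerDist_insert_of_isBridge (hab : G.IsBridge s(a, b)) (hx : x ∈ S) (hy : y ∈ S)
    (hax : (G.deleteEdges {s(a, b)}).Reachable a x)
    (hby : (G.deleteEdges {s(a, b)}).Reachable b y) :
    steinerDist G (insert a S) = steinerDist G S := by
  unfold steinerDist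
  congr 1
  ext m
  refine ⟨fun ⟨H, hH, hSH, hm⟩ ↦ ⟨H, hH, (Set.subset_insert a S).trans hSH, hm⟩,
    fun ⟨H, hH, hSH, hm⟩ ↦ ⟨H, hH, Set.insert_subset ?_ hSH, hm⟩⟩
  exact H.mem_verts_of_mem_edge (hH.mem_edgeSet_of_isBridge hab (hSH hx) (hSH hy) hax hby)
    (Sym2.mem_mk_left a b)

theorem steinerDist_insert_le (hG : G.Connected) (hab : G.Adj a b) (ha : a ∈ S) :
    steinerDist G (insert b S) ≤ steinerDist G S + 1 := by
  obtain ⟨H, hH, hSH, hcard⟩ := exists_steinerDist_eq hG S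
  have hconn : (H ⊔ G.subgraphOfAdj hab).Connected :=
    Subgraph.connected_sup hH.preconnected (Subgraph.subgraphOfAdj_connected hab).preconnected
      ⟨a, hSH ha, by simp⟩
  calc steinerDist G (insert b S) ≤ (H ⊔ G.subgraphOfAdj hab).edgeSet.ncard :=
        steinerDist_le hconn (Set.insert_subset (Or.inr (by simp)) (hSH.trans le_sup_left))
    _ ≤ H.edgeSet.ncard + ({s(a, b)} : Set (Sym2 V)).ncard := by
        rw [Subgraph.edgeSet_sup, edgeSet_subgraphOfAdj]
        exact Set.ncard_union_le _ _
    _ = steinerDist G S + 1 := by rw [hcard, Set.ncard_singleton]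

/-- A connected subgraph containing `insert b S`, restricted to the side of `a`, stays connected
and loses the edge `s(a, b)`. -/
theorem IsTree.steinerDist_add_one_le_insert [Finite V] (hG : G.IsTree) (hab : G.Adj a b)
    (ha : a ∈ S) (hS : ∀ v ∈ S, (G.deleteEdges {s(a, b)}).Reachable a v) :
    steinerDist G S + 1 ≤ steinerDist G (insert b S) := by
  have hbridge : G.IsBridge s(a, b) := isAcyclic_iff_forall_adj_isBridge.1 hG.isAcyclic hab
  obtain ⟨H, hH, hSH, hcard⟩ := exists_steinerDist_eq hG.connected (insert b S)
  set A := {v | v ∈ H.verts ∧ (G.deleteEdges {s(a, b)}).Reachable a v}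
  have hedge : s(a, b) ∈ H.edgeSet :=
    hH.mem_edgeSet_of_isBridge hbridge (hSH (Set.mem_insert_of_mem b ha))
      (hSH (Set.mem_insert b S)) .rfl .rfl
  have hsub : (H.induce A).edgeSet ⊆ H.edgeSet \ {s(a, b)} := by
    intro e he
    refine ⟨Subgraph.edgeSet_mono
      ((Subgraph.induce_mono_right fun v hv ↦ hv.1).trans Subgraph.induce_self_verts.le) he, ?_⟩
    rintro rfl
    exact hbridge ((H.induce A).mem_verts_of_mem_edge he (Sym2.mem_mk_right a b)).2
  calc steinerDist G S + 1 ≤ (H.induce A).edgeSet.ncard + 1 := by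
        gcongr
        exact steinerDist_le (hG.isAcyclic.connected_induce_reachable_deleteEdges hH
          (hSH (Set.mem_insert_of_mem b ha))) fun v hv ↦ ⟨hSH (Set.mem_insert_of_mem b hv), hS v hv⟩
    _ ≤ (H.edgeSet \ {s(a, b)}).ncard + 1 := by gcongr; exact Set.toFinite _
    _ = steinerDist G (insert b S) := by
        rw [Set.ncard_sdiff_singleton_add_one hedge (Set.toFinite _), hcard]

open Classical in
theorem IsTree.steinerDist_pair_union_sub [Finite V] {R : Type*} [AddCommGroupWithOne R]
    (hG : G.IsTree) (hab : G.Adj a b) (hw : (G.deleteEdges {s(a, b)}).Reachable a w)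
    (S : Set V) :
    (steinerDist G ({a, w} ∪ S) : R) - steinerDist G ({b, w} ∪ S) =
      if S ⊆ {v | (G.deleteEdges {s(a, b)}).Reachable a v} then -1 else 0 := by
  have hbridge : G.IsBridge s(a, b) := isAcyclic_iff_forall_adj_isBridge.1 hG.isAcyclic hab
  have hinsert : insert a ({b, w} ∪ S) = insert b ({a, w} ∪ S) := by
    ext; simp only [Set.mem_insert_iff, Set.mem_union]; tauto
  have hb : steinerDist G (insert a ({b, w} ∪ S)) = steinerDist G ({b, w} ∪ S) :=
    steinerDist_insert_of_isBridge hbridge (x := w) (y := b) (by simp) (by simp) hw .rfl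
  split_ifs with hS
  · have ha : steinerDist G (insert b ({a, w} ∪ S)) = steinerDist G ({a, w} ∪ S) + 1 := by
      refine le_antisymm (steinerDist_insert_le hG.connected hab (by simp)) ?_
      refine hG.steinerDist_add_one_le_insert hab (by simp) ?_
      rintro v ((rfl | rfl) | hv)
      exacts [.rfl, hw, hS hv]
    rw [← hb, hinsert, ha, Nat.cast_add, Nat.cast_one, sub_add_cancel_left]
  · obtain ⟨v, hvS, hav⟩ := Set.not_subset.1 hS
    have hbv := (hG.connected.preconnected.reachable_deleteEdges_or a b v).resolve_left hav
    have ha : steinerDist G (insert b ({a, w} ∪ S)) = steinerDist G ({a, w} ∪ S) := by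
      rw [Sym2.eq_swap] at hbridge hbv hw
      exact steinerDist_insert_of_isBridge hbridge (x := v) (y := a) (by simp [hvS]) (by simp)
        hbv .rfl
    rw [← ha, ← hb, hinsert, sub_self]

theorem IsTree.steinerRow_sub_steinerRow [Fintype V] [DecidableEq V] {R : Type*} [CommRing R]
    (hG : G.IsTree) (hab : G.Adj a b) (hw : (G.deleteEdges {s(a, b)}).Reachable a w) (k : ℕ)
    {A : Finset V} (hA : ∀ v, v ∈ A ↔ (G.deleteEdges {s(a, b)}).Reachable a v) :
    steinerRow G R k a w - steinerRow G R k b w = -(∑ i ∈ A, X i) ^ (k - 2) := by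
  simp only [steinerRow, ← Finset.sum_sub_distrib, ← sub_mul,
    hG.steinerDist_pair_union_sub hab hw, Set.range_subset_iff, Set.mem_ofPred_eq, ← hA,
    Finset.sum_pow_eq_sum_ite_forall_mem,
    ← Finset.sum_neg_distrib, ite_mul, neg_one_mul, zero_mul, neg_ite, neg_zero]

end SimpleGraph

theorem stmt6_general (n k : ℕ) (R : Type*) [CommRing R]
    (T : SimpleGraph (Fin (n + 1))) (hT : T.IsTree)
    (u u' : Fin (n + 1)) (hadj : T.Adj u u')
    (hcomp : ∀ i : Fin (n + 1),
      (i ≤ u → (T.deleteEdges {s(u, u')}).Reachable u i) ∧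
      (u < i → (T.deleteEdges {s(u, u')}).Reachable u' i)) :
    (∀ w : Fin (n + 1), w ≤ u →
      steinerRow T R k u w - steinerRow T R k u' w
        = -(∑ i ∈ Finset.univ.filter (· ≤ u), (X i : MvPolynomial (Fin (n + 1)) R)) ^ (k - 2)) ∧
    (∀ w : Fin (n + 1), u < w →
      steinerRow T R k u w - steinerRow T R k u' w
        = (∑ i ∈ Finset.univ.filter (u < ·), (X i : MvPolynomial (Fin (n + 1)) R)) ^ (k - 2)) := by
  have hbridge : ¬ (T.deleteEdges {s(u, u')}).Reachable u u' :=
    isAcyclic_iff_forall_adj_isBridge.1 hT.isAcyclic hadj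
  have hleft (i : Fin (n + 1)) :
      i ∈ Finset.univ.filter (· ≤ u) ↔ (T.deleteEdges {s(u, u')}).Reachable u i := by
    rw [Finset.mem_filter_univ]
    exact ⟨(hcomp i).1, fun hi ↦ le_of_not_gt fun hlt ↦ hbridge (hi.trans ((hcomp i).2 hlt).symm)⟩
  have hright (i : Fin (n + 1)) :
      i ∈ Finset.univ.filter (u < ·) ↔ (T.deleteEdges {s(u', u)}).Reachable u' i := by
    rw [Finset.mem_filter_univ, Sym2.eq_swap]
    exact ⟨(hcomp i).2, fun hi ↦ lt_of_not_ge fun hle ↦ hbridge (((hcomp i).1 hle).trans hi.symm)⟩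
  refine ⟨fun w hw ↦ hT.steinerRow_sub_steinerRow hadj ((hcomp w).1 hw) k hleft,
    fun w hw ↦ ?_⟩
  rw [← neg_sub, hT.steinerRow_sub_steinerRow hadj.symm ((hright w).1 (by simpa)) k hright,
    neg_neg]

/-- Graham–Pollak-type row difference identity for Steiner distance hypermatrices of trees. -/
theorem stmt6 (n k : ℕ) (hn : 1 ≤ n) (hk : 2 ≤ k) (R : Type*) [CommRing R]
    (T : SimpleGraph (Fin (n + 1))) (hT : T.IsTree)
    (u u' : Fin (n + 1)) (huu' : (u' : ℕ) = (u : ℕ) + 1) (hadj : T.Adj u u')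
    (hcomp : ∀ i : Fin (n + 1),
      (i ≤ u → (T.deleteEdges {s(u, u')}).Reachable u i) ∧
      (u < i → (T.deleteEdges {s(u, u')}).Reachable u' i)) :
    (∀ w : Fin (n + 1), w ≤ u →
      steinerRow T R k u w - steinerRow T R k u' w
        = -(∑ i ∈ Finset.univ.filter (· ≤ u), (X i : MvPolynomial (Fin (n + 1)) R)) ^ (k - 2)) ∧
    (∀ w : Fin (n + 1), u < w →
      steinerRow T R k u w - steinerRow T R k u' w
        = (∑ i ∈ Finset.univ.filter (u < ·), (X i : MvPolynomial (Fin (n + 1)) R)) ^ (k - 2)) :=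
  stmt6_general n k R T hT u u' hadj hcomp
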